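/- arXiv:1503.01328 — 2 statements merged into one kernel-verified Lean document; each statement's English description precedes it below -/
import Mathlib

section
/- For all real constants γ > 0, σ > 0, α > 0 and β ∈ ℝ, one has ∫_{-∞}^{∞} e^{-α(y-β)²} ( ∫_{-∞}^{y} e^{-σ x²} G_γ(x) dx ) dy = (π^{3/2}/√(ασγ)) · Φ_Σ(0, β), where Σ is the 2×2 matrix with entries Σ₁₁ = (σ+γ)/(2σγ), Σ₁₂ = Σ₂₁ = -1/(2σ), Σ₂₂ = (σ+α)/(2σα). -/
/-
Substituting `x = y + v` and `t = x + s` turns the left-hand side into the integral of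
`exp (-(α (y - β)² + σ (v + y)² + γ (s + v + y)²))` over `y ∈ ℝ`, `v, s ≤ 0`. Completing the square
in `y` integrates `y` out, leaving `√(π / (σ + α + γ))` times the integral of `exp (-Q (s, β + v))`
over the quadrant `s, v ≤ 0`, where `Q (s, t) = ½ (s, t) Σ⁻¹ (s, t)ᵀ`; this is `Φ_Σ (0, β)` up to the
normalising constant, and `det Σ = (σ + α + γ) / (4 α σ γ)` makes the constants match.
Every change in the order of integration is justified by a product-of-Gaussians bound.
-/

open MeasureTheory Real Matrix

/-- `G_γ(x) = ∫_{-∞}^x e^{-γ t²} dt`. -/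
noncomputable def Gint (γ x : ℝ) : ℝ := ∫ t in Set.Iic x, Real.exp (-γ * t ^ 2)

/-- Centered bivariate Gaussian cumulative distribution function with covariance `S`. -/
noncomputable def PhiMat (S : Matrix (Fin 2) (Fin 2) ℝ) (x₁ x₂ : ℝ) : ℝ :=
  ∫ s in Set.Iic x₁, ∫ t in Set.Iic x₂,
    (2 * Real.pi * Real.sqrt S.det)⁻¹ *
      Real.exp (-(1 / 2) * (![s, t] ⬝ᵥ (S⁻¹ *ᵥ ![s, t])))

open Set

lemma setIntegral_Iic_eq_comp_add (f : ℝ → ℝ) (a : ℝ) :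
    ∫ t in Iic a, f t = ∫ v in Iic 0, f (v + a) := by
  rw [← (measurePreserving_add_right volume a).setIntegral_preimage_emb
    (measurableEmbedding_addRight a) f (Iic a)]
  congr 1
  ext x
  simp

lemma integral_exp_neg_mul_sq_sub_add (a m R : ℝ) :
    ∫ y : ℝ, exp (-(a * (y - m) ^ 2 + R)) = √(π / a) * exp (-R) := by
  simp_rw [neg_add, exp_add, integral_mul_const, ← neg_mul]
  rw [integral_sub_right_eq_self (fun y => exp (-a * y ^ 2)) m, integral_gaussian]

lemma half_mul_sq_add_le {a b : ℝ} (ha : 0 < a) (hb : 0 < b) (x w : ℝ) :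
    a / 2 * x ^ 2 + a * b / (a + 2 * b) * w ^ 2 ≤ a * x ^ 2 + b * (x + w) ^ 2 := by
  have key : a * b / (a + 2 * b) * w ^ 2 ≤ a / 2 * x ^ 2 + b * (x + w) ^ 2 := by
    rw [div_mul_eq_mul_div, div_le_iff₀ (by positivity)]
    nlinarith [sq_nonneg ((a + 2 * b) * x + 2 * b * w)]
  nlinarith [sq_nonneg x]

lemma integrable_of_norm_le_gaussian_mul_gaussian {μ ν : Measure ℝ} [SFinite μ] [SFinite ν]
    (hμ : μ ≤ volume) (hν : ν ≤ volume) {F : ℝ × ℝ → ℝ} (hF : AEStronglyMeasurable F (μ.prod ν))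
    {a b p q C : ℝ} (ha : 0 < a) (hb : 0 < b)
    (hle : ∀ x y, ‖F (x, y)‖ ≤ C * exp (-a * (x - p) ^ 2) * exp (-b * (y - q) ^ 2)) :
    Integrable F (μ.prod ν) := by
  have hg : Integrable (fun x => C * exp (-a * (x - p) ^ 2)) μ :=
    (((integrable_exp_neg_mul_sq ha).comp_sub_right p).const_mul C).mono_measure hμ
  have hh : Integrable (fun y => exp (-b * (y - q) ^ 2)) ν :=
    ((integrable_exp_neg_mul_sq hb).comp_sub_right q).mono_measure hν
  exact (hg.mul_prod hh).mono' hF (ae_of_all _ fun z => hle z.1 z.2)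

lemma Gint_nonneg (γ x : ℝ) : 0 ≤ Gint γ x :=
  integral_nonneg fun _ => (exp_pos _).le

lemma Gint_le {γ : ℝ} (hγ : 0 < γ) (x : ℝ) : Gint γ x ≤ √(π / γ) := by
  rw [← integral_gaussian]
  exact setIntegral_le_integral (integrable_exp_neg_mul_sq hγ)
    (ae_of_all _ fun _ => (exp_pos _).le)

lemma Gint_monotone {γ : ℝ} (hγ : 0 < γ) : Monotone (Gint γ) := fun _ _ h =>
  setIntegral_mono_set (integrable_exp_neg_mul_sq hγ).integrableOn
    (ae_of_all _ fun _ => (exp_pos _).le) (Iic_subset_Iic.mpr h).eventuallyLE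

lemma integrable_mul_Gint {γ σ α β : ℝ} (hγ : 0 < γ) (hσ : 0 < σ) (hα : 0 < α) :
    Integrable (Function.uncurry fun y v =>
      exp (-α * (y - β) ^ 2) * (exp (-σ * (v + y) ^ 2) * Gint γ (v + y)))
      (volume.prod (volume.restrict (Iic 0))) := by
  refine integrable_of_norm_le_gaussian_mul_gaussian le_rfl Measure.restrict_le_self ?_
    (a := α / 2) (b := α * σ / (α + 2 * σ)) (p := β) (q := -β) (C := √(π / γ))
    (by positivity) (by positivity) fun y v => ?_
  · refine Measurable.aestronglyMeasurable (Measurable.mul (by fun_prop) (.mul (by fun_prop) ?_))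
    exact (Gint_monotone hγ).measurable.comp (measurable_snd.add measurable_fst)
  · have hq := half_mul_sq_add_le hα hσ (y - β) (v - -β)
    rw [show y - β + (v - -β) = v + y by ring] at hq
    have hG := Gint_nonneg γ (v + y)
    rw [Function.uncurry_apply_pair, norm_of_nonneg (by positivity)]
    calc exp (-α * (y - β) ^ 2) * (exp (-σ * (v + y) ^ 2) * Gint γ (v + y))
        = Gint γ (v + y) * exp (-(α * (y - β) ^ 2 + σ * (v + y) ^ 2)) := by
          rw [neg_add, exp_add, neg_mul, neg_mul]; ring
      _ ≤ √(π / γ) * exp (-(α / 2 * (y - β) ^ 2 + α * σ / (α + 2 * σ) * (v - -β) ^ 2)) := by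
          gcongr
          exact Gint_le hγ _
      _ = _ := by rw [neg_add, exp_add, neg_mul, neg_mul, mul_assoc]

noncomputable def gaussQuad (γ σ α s t : ℝ) : ℝ :=
  (γ * (σ + α) * s ^ 2 + 2 * γ * α * s * t + α * (σ + γ) * t ^ 2) / (σ + α + γ)

lemma weighted_sq_sum_eq {γ σ α : ℝ} (h : σ + α + γ ≠ 0) (β v s y : ℝ) :
    α * (y - β) ^ 2 + σ * (v + y) ^ 2 + γ * (s + v + y) ^ 2 =
      (σ + α + γ) * (y - (α * β - σ * v - γ * (s + v)) / (σ + α + γ)) ^ 2 +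
        gaussQuad γ σ α s (β + v) := by
  rw [gaussQuad]
  field_simp
  ring

lemma integral_exp_neg_weighted_sq_sum {γ σ α : ℝ} (h : σ + α + γ ≠ 0) (β v s : ℝ) :
    ∫ y : ℝ, exp (-(α * (y - β) ^ 2 + σ * (v + y) ^ 2 + γ * (s + v + y) ^ 2)) =
      √(π / (σ + α + γ)) * exp (-gaussQuad γ σ α s (β + v)) := by
  simp_rw [weighted_sq_sum_eq h]
  exact integral_exp_neg_mul_sq_sub_add _ _ _

lemma integrable_exp_neg_weighted_sq_sum {γ σ α : ℝ} (hγ : 0 < γ) (hσ : 0 < σ) (hα : 0 < α)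
    (β v : ℝ) :
    Integrable (Function.uncurry fun y s =>
      exp (-(α * (y - β) ^ 2 + σ * (v + y) ^ 2 + γ * (s + v + y) ^ 2)))
      (volume.prod (volume.restrict (Iic 0))) := by
  refine integrable_of_norm_le_gaussian_mul_gaussian le_rfl Measure.restrict_le_self
    (Measurable.aestronglyMeasurable (by fun_prop))
    (a := α / 2) (b := α * γ / (α + 2 * γ)) (p := β) (q := -(v + β)) (C := 1)
    (by positivity) (by positivity) fun y s => ?_
  have hq := half_mul_sq_add_le hα hγ (y - β) (s - -(v + β))
  rw [show y - β + (s - -(v + β)) = s + v + y by ring] at hq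
  rw [Function.uncurry_apply_pair, norm_of_nonneg (by positivity), one_mul, ← exp_add,
    exp_le_exp]
  nlinarith [mul_nonneg hσ.le (sq_nonneg (v + y))]

lemma integral_mul_Gint_eq {γ σ α : ℝ} (hγ : 0 < γ) (hσ : 0 < σ) (hα : 0 < α) (β v : ℝ) :
    ∫ y : ℝ, exp (-α * (y - β) ^ 2) * (exp (-σ * (v + y) ^ 2) * Gint γ (v + y)) =
      √(π / (σ + α + γ)) * ∫ s in Iic 0, exp (-gaussQuad γ σ α s (β + v)) := by
  have hexpand : ∀ y : ℝ, exp (-α * (y - β) ^ 2) * (exp (-σ * (v + y) ^ 2) * Gint γ (v + y)) =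
      ∫ s in Iic 0, exp (-(α * (y - β) ^ 2 + σ * (v + y) ^ 2 + γ * (s + v + y) ^ 2)) := by
    intro y
    rw [Gint, setIntegral_Iic_eq_comp_add, ← integral_const_mul, ← integral_const_mul]
    congr 1 with s
    rw [← exp_add, ← exp_add]
    ring_nf
  simp_rw [hexpand]
  rw [integral_integral_swap (integrable_exp_neg_weighted_sq_sum hγ hσ hα β v),
    ← integral_const_mul]
  simp_rw [integral_exp_neg_weighted_sq_sum (by positivity : σ + α + γ ≠ 0)]

lemma le_gaussQuad {γ σ α : ℝ} (hγ : 0 < γ) (hσ : 0 < σ) (hα : 0 < α) (s t : ℝ) :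
    γ * σ / (σ + α + γ) * s ^ 2 + α * σ / (σ + α + γ) * t ^ 2 ≤ gaussQuad γ σ α s t := by
  rw [gaussQuad, div_mul_eq_mul_div, div_mul_eq_mul_div, ← add_div]
  refine div_le_div_of_nonneg_right ?_ (by positivity)
  nlinarith [sq_nonneg (s + t), mul_pos hγ hα]

lemma integrable_exp_neg_gaussQuad {γ σ α : ℝ} (hγ : 0 < γ) (hσ : 0 < σ) (hα : 0 < α) (β : ℝ) :
    Integrable (Function.uncurry fun v s => exp (-gaussQuad γ σ α s (β + v)))
      ((volume.restrict (Iic 0)).prod (volume.restrict (Iic 0))) := by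
  refine integrable_of_norm_le_gaussian_mul_gaussian Measure.restrict_le_self
    Measure.restrict_le_self (Measurable.aestronglyMeasurable ?_)
    (a := α * σ / (σ + α + γ)) (b := γ * σ / (σ + α + γ)) (p := -β) (q := 0) (C := 1)
    (by positivity) (by positivity) fun v s => ?_
  · unfold gaussQuad
    fun_prop
  · have hq := le_gaussQuad hγ hσ hα s (β + v)
    rw [Function.uncurry_apply_pair, norm_of_nonneg (by positivity), one_mul, ← exp_add,
      exp_le_exp, sub_neg_eq_add, sub_zero, add_comm v]
    linarith

noncomputable def gaussCov (γ σ α : ℝ) : Matrix (Fin 2) (Fin 2) ℝ :=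
  !![(σ + γ) / (2 * σ * γ), -(1 / (2 * σ)); -(1 / (2 * σ)), (σ + α) / (2 * σ * α)]

section gaussCov

variable {γ σ α : ℝ} (hγ : 0 < γ) (hσ : 0 < σ) (hα : 0 < α)
include hγ hσ hα

lemma det_gaussCov : (gaussCov γ σ α).det = (σ + α + γ) / (4 * (α * σ * γ)) := by
  rw [gaussCov, det_fin_two_of]
  field_simp
  ring

lemma inv_gaussCov : (gaussCov γ σ α)⁻¹ =
    !![2 * γ * (σ + α) / (σ + α + γ), 2 * γ * α / (σ + α + γ);
      2 * γ * α / (σ + α + γ), 2 * α * (σ + γ) / (σ + α + γ)] := by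
  have : σ + α + γ ≠ 0 := by positivity
  refine inv_eq_right_inv ?_
  rw [gaussCov, mul_fin_two, one_fin_two]
  ext i j
  fin_cases i <;> fin_cases j <;>
    simp only [Fin.zero_eta, Fin.mk_one, of_apply, cons_val', cons_val_zero, cons_val_one,
      cons_val_fin_one] <;>
    field_simp <;> ring

lemma dotProduct_inv_gaussCov_mulVec (s t : ℝ) :
    ![s, t] ⬝ᵥ ((gaussCov γ σ α)⁻¹ *ᵥ ![s, t]) = 2 * gaussQuad γ σ α s t := by
  rw [inv_gaussCov hγ hσ hα, gaussQuad]
  simp only [vec2_dotProduct, mulVec, of_apply, cons_val_zero, cons_val_one]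
  ring

end gaussCov

lemma PhiMat_gaussCov {γ σ α : ℝ} (hγ : 0 < γ) (hσ : 0 < σ) (hα : 0 < α) (β : ℝ) :
    PhiMat (gaussCov γ σ α) 0 β = (2 * π * √((σ + α + γ) / (4 * (α * σ * γ))))⁻¹ *
      ∫ s in Iic 0, ∫ v in Iic 0, exp (-gaussQuad γ σ α s (β + v)) := by
  have hexponent : ∀ s t : ℝ,
      -(1 / 2) * (![s, t] ⬝ᵥ ((gaussCov γ σ α)⁻¹ *ᵥ ![s, t])) = -gaussQuad γ σ α s t := by
    intro s t
    rw [dotProduct_inv_gaussCov_mulVec hγ hσ hα]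
    ring
  simp_rw [PhiMat, hexponent, integral_const_mul, det_gaussCov hγ hσ hα]
  simp_rw [setIntegral_Iic_eq_comp_add (fun t => exp (-gaussQuad γ σ α _ t)) β, add_comm _ β]

lemma pi_rpow_three_halves_div_sqrt_mul_inv {P S : ℝ} (hP : 0 < P) (hS : 0 < S) :
    π ^ (3 / 2 : ℝ) / √P * (2 * π * √(S / (4 * P)))⁻¹ = √(π / S) := by
  have hπ32 : π ^ (3 / 2 : ℝ) = π * √π := by
    rw [show (3 / 2 : ℝ) = 1 + 1 / 2 by norm_num, rpow_add pi_pos, rpow_one, sqrt_eq_rpow]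
  rw [hπ32, sqrt_div hS.le, sqrt_mul (by norm_num), sqrt_div pi_pos.le,
    show √4 = 2 by rw [show (4 : ℝ) = 2 ^ 2 by norm_num, sqrt_sq zero_le_two]]
  have : √π ≠ 0 := by positivity
  have : √P ≠ 0 := by positivity
  have : √S ≠ 0 := by positivity
  field_simp

theorem stmt1 (γ σ α β : ℝ) (hγ : 0 < γ) (hσ : 0 < σ) (hα : 0 < α) :
    (∫ y : ℝ, Real.exp (-α * (y - β) ^ 2) *
        ∫ x in Set.Iic y, Real.exp (-σ * x ^ 2) * Gint γ x) =
      Real.pi ^ (3 / 2 : ℝ) / Real.sqrt (α * σ * γ) *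
        PhiMat !![(σ + γ) / (2 * σ * γ), -(1 / (2 * σ));
                  -(1 / (2 * σ)), (σ + α) / (2 * σ * α)] 0 β := by
  calc (∫ y : ℝ, exp (-α * (y - β) ^ 2) * ∫ x in Iic y, exp (-σ * x ^ 2) * Gint γ x)
      = ∫ y : ℝ, ∫ v in Iic 0,
          exp (-α * (y - β) ^ 2) * (exp (-σ * (v + y) ^ 2) * Gint γ (v + y)) := by
        simp_rw [setIntegral_Iic_eq_comp_add (fun x => exp (-σ * x ^ 2) * Gint γ x) _,
          integral_const_mul]
    _ = ∫ v in Iic 0, √(π / (σ + α + γ)) * ∫ s in Iic 0, exp (-gaussQuad γ σ α s (β + v)) := by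
        rw [integral_integral_swap (integrable_mul_Gint hγ hσ hα)]
        simp_rw [integral_mul_Gint_eq hγ hσ hα]
    _ = √(π / (σ + α + γ)) * ∫ s in Iic 0, ∫ v in Iic 0, exp (-gaussQuad γ σ α s (β + v)) := by
        rw [integral_const_mul, integral_integral_swap (integrable_exp_neg_gaussQuad hγ hσ hα β)]
    _ = _ := by
        rw [← pi_rpow_three_halves_div_sqrt_mul_inv (by positivity : 0 < α * σ * γ)
          (by positivity : 0 < σ + α + γ), mul_assoc, ← PhiMat_gaussCov hγ hσ hα]
        rfl
end

section
/- For every λ₃ ∈ ℝ, ∫_{-∞}^{λ₃} e^{-λ₂²/2} (λ₃-λ₂) ( ∫_{-∞}^{λ₂} e^{-λ₁²/2} (λ₂-λ₁)(λ₃-λ₁) dλ₁ ) dλ₂ = (2λ₃² - 1) G₁(λ₃) + e^{-λ₃²/2} G_{1/2}(λ₃) + λ₃ e^{-λ₃²}. -/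
/-!
Both integrals are evaluated by the fundamental theorem of calculus on `(-∞, x]`: each integrand
has an explicit primitive, built from `G_{1/2}`, `G_1` and Gaussians, that vanishes at `-∞`.
Because `t e^{-t²/2}` is the derivative of `-e^{-t²/2}`, the inner integral is
`(1 + λ₂λ₃) G_{1/2}(λ₂) + λ₃ e^{-λ₂²/2}`, and the outer integrand becomes a combination of
`e^{-λ₂²/2} G_{1/2}(λ₂)` and `e^{-λ₂²}` times polynomials; the primitive of the former
contains `G_1` since `(G_{1/2})' e^{-λ₂²/2} = e^{-λ₂²}`.
-/

open MeasureTheory Real Filter Set Topology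

lemma exp_neg_sq_div_two (t : ℝ) : exp (-(t ^ 2) / 2) = exp (-(1 / 2) * t ^ 2) := by
  ring_nf

lemma exp_neg_one_mul_sq (t : ℝ) :
    exp (-1 * t ^ 2) = exp (-(1 / 2) * t ^ 2) * exp (-(1 / 2) * t ^ 2) := by
  rw [← exp_add]; ring_nf

lemma hasDerivAt_exp_neg_mul_sq (b t : ℝ) :
    HasDerivAt (fun t : ℝ => exp (-b * t ^ 2)) (-2 * b * t * exp (-b * t ^ 2)) t := by
  have h := ((hasDerivAt_pow 2 t).const_mul (-b)).exp
  convert h using 1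
  ring

lemma integrable_quadratic_mul_exp_neg_mul_sq {b : ℝ} (hb : 0 < b) (a₀ a₁ a₂ : ℝ) :
    Integrable fun t : ℝ => (a₀ + a₁ * t + a₂ * t ^ 2) * exp (-b * t ^ 2) := by
  have hmon (n : ℕ) : Integrable fun t : ℝ => t ^ n * exp (-b * t ^ 2) := by
    simpa using integrable_rpow_mul_exp_neg_mul_sq hb (s := n) (neg_one_lt_zero.trans_le n.cast_nonneg)
  refine ((((hmon 0).const_mul a₀).add ((hmon 1).const_mul a₁)).add
    ((hmon 2).const_mul a₂)).congr (ae_of_all _ fun t => ?_)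
  simp only [Pi.add_apply]
  ring

lemma tendsto_pow_mul_exp_neg_mul_sq_atBot {b : ℝ} (hb : 0 < b) (n : ℕ) :
    Tendsto (fun t : ℝ => t ^ n * exp (-b * t ^ 2)) atBot (𝓝 0) := by
  rw [tendsto_zero_iff_norm_tendsto_zero]
  refine ((tendsto_rpow_abs_mul_exp_neg_mul_sq_cocompact hb n).mono_left
    atBot_le_cocompact).congr fun t => ?_
  rw [rpow_natCast, norm_mul, norm_pow, norm_eq_abs, norm_of_nonneg (exp_pos _).le]

lemma tendsto_exp_neg_mul_sq_atBot {b : ℝ} (hb : 0 < b) :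
    Tendsto (fun t : ℝ => exp (-b * t ^ 2)) atBot (𝓝 0) := by
  simpa using tendsto_pow_mul_exp_neg_mul_sq_atBot hb 0

namespace Gint

variable {γ : ℝ}

lemma eq_add_intervalIntegral (hγ : 0 < γ) (a x : ℝ) :
    Gint γ x = Gint γ a + ∫ t in a..x, exp (-γ * t ^ 2) := by
  have hint := (integrable_exp_neg_mul_sq hγ).integrableOn (s := Iic a)
  rw [← intervalIntegral.integral_Iic_sub_Iic hint (integrable_exp_neg_mul_sq hγ).integrableOn,
    Gint, Gint, add_sub_cancel]

lemma hasDerivAt (hγ : 0 < γ) (x : ℝ) : HasDerivAt (Gint γ) (exp (-γ * x ^ 2)) x := by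
  have hc : Continuous fun t : ℝ => exp (-γ * t ^ 2) := by fun_prop
  rw [funext (eq_add_intervalIntegral hγ 0)]
  exact (intervalIntegral.integral_hasDerivAt_right
    (integrable_exp_neg_mul_sq hγ).intervalIntegrable (hc.stronglyMeasurableAtFilter _ _)
    hc.continuousAt).const_add _

lemma continuous (hγ : 0 < γ) : Continuous (Gint γ) :=
  continuous_iff_continuousAt.2 fun x => (hasDerivAt hγ x).continuousAt

lemma norm_le_integral (hγ : 0 < γ) (x : ℝ) : ‖Gint γ x‖ ≤ ∫ t, exp (-γ * t ^ 2) := by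
  rw [Gint, norm_of_nonneg (setIntegral_nonneg measurableSet_Iic fun t _ => (exp_pos _).le)]
  exact setIntegral_le_integral (integrable_exp_neg_mul_sq hγ)
    (ae_of_all _ fun t => (exp_pos _).le)

lemma tendsto_atBot (hγ : 0 < γ) : Tendsto (Gint γ) atBot (𝓝 0) := by
  have h := (tendsto_const_nhds (x := Gint γ 0)).sub (intervalIntegral_tendsto_integral_Iic
    (0 : ℝ) (integrable_exp_neg_mul_sq hγ).integrableOn tendsto_id)
  rw [show ∫ t in Iic (0 : ℝ), exp (-γ * t ^ 2) = Gint γ 0 from rfl, sub_self] at h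
  refine h.congr fun x => ?_
  rw [eq_add_intervalIntegral hγ 0 x, id, intervalIntegral.integral_symm 0 x, sub_neg_eq_add]

lemma integrable_mul (hγ : 0 < γ) {g : ℝ → ℝ} (hg : Integrable g) :
    Integrable fun t => Gint γ t * g t :=
  hg.bdd_mul (continuous hγ).aestronglyMeasurable (ae_of_all _ (norm_le_integral hγ))

end Gint

lemma integral_Iic_eq_of_hasDerivAt {f f' : ℝ → ℝ} (hderiv : ∀ t, HasDerivAt f (f' t) t)
    (hint : Integrable f') (hlim : Tendsto f atBot (𝓝 0)) (x : ℝ) :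
    ∫ t in Iic x, f' t = f x := by
  rw [integral_Iic_of_hasDerivAt_of_tendsto' (fun t _ => hderiv t) hint.integrableOn hlim,
    sub_zero]

lemma integral_Iic_exp_mul_sub_mul_sub (c x : ℝ) :
    ∫ t in Iic x, exp (-(t ^ 2) / 2) * (x - t) * (c - t) =
      (1 + x * c) * Gint (1 / 2) x + c * exp (-(x ^ 2) / 2) := by
  have hderiv (t : ℝ) : HasDerivAt
      (fun t => (1 + x * c) * Gint (1 / 2) t + (x + c - t) * exp (-(1 / 2) * t ^ 2))
      (exp (-(t ^ 2) / 2) * (x - t) * (c - t)) t := by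
    have h := ((Gint.hasDerivAt one_half_pos t).const_mul (1 + x * c)).add
      (((hasDerivAt_id' t).const_sub (x + c)).mul (hasDerivAt_exp_neg_mul_sq (1 / 2) t))
    refine h.congr_deriv ?_
    rw [exp_neg_sq_div_two]
    ring
  have hint : Integrable fun t => exp (-(t ^ 2) / 2) * (x - t) * (c - t) := by
    refine (integrable_quadratic_mul_exp_neg_mul_sq one_half_pos (x * c) (-(x + c)) 1).congr
      (ae_of_all _ fun t => ?_)
    simp only [exp_neg_sq_div_two]
    ring
  have hlim : Tendsto
      (fun t => (1 + x * c) * Gint (1 / 2) t + (x + c - t) * exp (-(1 / 2) * t ^ 2))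
      atBot (𝓝 0) := by
    have h := ((Gint.tendsto_atBot one_half_pos).const_mul (1 + x * c)).add
      (((tendsto_exp_neg_mul_sq_atBot one_half_pos).const_mul (x + c)).sub
        (tendsto_pow_mul_exp_neg_mul_sq_atBot one_half_pos 1))
    simp only [mul_zero, sub_zero, add_zero, pow_one] at h
    refine h.congr fun t => ?_
    ring
  rw [integral_Iic_eq_of_hasDerivAt hderiv hint hlim, exp_neg_sq_div_two]
  ring

section Outer

variable (c : ℝ)

noncomputable def outerPrimitive (s : ℝ) : ℝ :=
  (2 * c ^ 2 - 1) * Gint 1 s + (1 - c ^ 2 + c * s) * exp (-(1 / 2) * s ^ 2) * Gint (1 / 2) s +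
    c * exp (-1 * s ^ 2)

noncomputable def outerIntegrand (s : ℝ) : ℝ :=
  exp (-(s ^ 2) / 2) * (c - s) * ((1 + s * c) * Gint (1 / 2) s + c * exp (-(s ^ 2) / 2))

lemma hasDerivAt_outerPrimitive (s : ℝ) :
    HasDerivAt (outerPrimitive c) (outerIntegrand c s) s := by
  have hlin : HasDerivAt (fun s : ℝ => 1 - c ^ 2 + c * s) c s := by
    simpa using ((hasDerivAt_id s).const_mul c).const_add (1 - c ^ 2)
  have h := (((Gint.hasDerivAt one_pos s).const_mul (2 * c ^ 2 - 1)).add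
    ((hlin.mul (hasDerivAt_exp_neg_mul_sq (1 / 2) s)).mul
      (Gint.hasDerivAt one_half_pos s))).add
    ((hasDerivAt_exp_neg_mul_sq 1 s).const_mul c)
  refine h.congr_deriv ?_
  simp only [outerIntegrand, Pi.mul_apply, exp_neg_sq_div_two]
  rw [exp_neg_one_mul_sq]
  ring

lemma integrable_outerIntegrand : Integrable (outerIntegrand c) := by
  have h := (Gint.integrable_mul one_half_pos
    (integrable_quadratic_mul_exp_neg_mul_sq one_half_pos c (c ^ 2 - 1) (-c))).add
    (integrable_quadratic_mul_exp_neg_mul_sq one_pos (c ^ 2) (-c) 0)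
  refine h.congr (ae_of_all _ fun s => ?_)
  simp only [outerIntegrand, Pi.add_apply, exp_neg_sq_div_two]
  rw [exp_neg_one_mul_sq]
  ring

lemma tendsto_outerPrimitive_atBot : Tendsto (outerPrimitive c) atBot (𝓝 0) := by
  have hpoly : Tendsto (fun s : ℝ => (1 - c ^ 2 + c * s) * exp (-(1 / 2) * s ^ 2)) atBot
      (𝓝 0) := by
    have h := ((tendsto_exp_neg_mul_sq_atBot one_half_pos).const_mul (1 - c ^ 2)).add
      ((tendsto_pow_mul_exp_neg_mul_sq_atBot one_half_pos 1).const_mul c)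
    simp only [mul_zero, add_zero, pow_one] at h
    exact h.congr fun s => by ring
  have h := (((Gint.tendsto_atBot one_pos).const_mul (2 * c ^ 2 - 1)).add
    (hpoly.mul (Gint.tendsto_atBot one_half_pos))).add
    ((tendsto_exp_neg_mul_sq_atBot one_pos).const_mul c)
  simp only [mul_zero, add_zero] at h
  exact h

end Outer

theorem stmt2 (l3 : ℝ) :
    (∫ l2 in Set.Iic l3, Real.exp (-(l2 ^ 2) / 2) * (l3 - l2) *
        ∫ l1 in Set.Iic l2, Real.exp (-(l1 ^ 2) / 2) * (l2 - l1) * (l3 - l1)) =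
      (2 * l3 ^ 2 - 1) * Gint 1 l3 + Real.exp (-(l3 ^ 2) / 2) * Gint (1 / 2) l3 +
        l3 * Real.exp (-(l3 ^ 2)) := by
  simp only [integral_Iic_exp_mul_sub_mul_sub l3]
  refine (integral_Iic_eq_of_hasDerivAt (hasDerivAt_outerPrimitive l3)
    (integrable_outerIntegrand l3) (tendsto_outerPrimitive_atBot l3) l3).trans ?_
  rw [outerPrimitive, exp_neg_sq_div_two, neg_one_mul]
  ring
end
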